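/- arXiv:2507.05972 — 7 statements merged into one kernel-verified Lean document; each statement's English description precedes it below -/
import Mathlib

section
/- Let G ⊆ ℝ^L be a nonempty bounded convex set, let φ : G → ℝ be a closed convex function, and let ψ : ℝ^L → ℝ be its convex conjugate. Assume ψ is λ-smooth with respect to a norm ‖·‖ on ℝ^L for some λ ≥ 0. Suppose (g_k, h_k) and (g_{k+1}, h_{k+1}) in G × ℝ^L are conjugate pairs satisfying h_{k+1} = h_k − f for some f ∈ ℝ^L. Then for every g* ∈ G, Γ(g*, h_k) − Γ(g*, h_{k+1}) ≥ ⟨g_k − g*, f⟩ − (λ/2)‖f‖². -/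
noncomputable section

/-- Standard inner product on `ℝ^L`. -/
def dot {L : ℕ} (g h : Fin L → ℝ) : ℝ := ∑ y, g y * h y

/-- Convex conjugate of `φ : G → ℝ`: `ψ(h) = sup_{g ∈ G} (⟨g,h⟩ - φ(g))`. -/
def conj {L : ℕ} (G : Set (Fin L → ℝ)) (φ : (Fin L → ℝ) → ℝ) (h : Fin L → ℝ) : ℝ :=
  sSup ((fun g => dot g h - φ g) '' G)

/-- Fenchel–Young divergence `Γ(g,h) = φ(g) + ψ(h) - ⟨g,h⟩`. -/
def FY {L : ℕ} (G : Set (Fin L → ℝ)) (φ : (Fin L → ℝ) → ℝ) (g h : Fin L → ℝ) : ℝ :=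
  φ g + conj G φ h - dot g h

lemma dot_sub_right {L : ℕ} (a b c : Fin L → ℝ) : dot a (b - c) = dot a b - dot a c := by
  simp [dot, mul_sub, Finset.sum_sub_distrib]

lemma dot_sub_left {L : ℕ} (a b c : Fin L → ℝ) : dot (a - b) c = dot a c - dot b c := by
  simp [dot, sub_mul, Finset.sum_sub_distrib]

/-- Mirror-descent lemma: if `ψ = conj G φ` is `λ`-smooth w.r.t. a norm `N`, and
`(gk, hk)`, `(gk1, hk1)` are conjugate pairs with `hk1 = hk - f`, then for every `g* ∈ G`,
`Γ(g*, hk) - Γ(g*, hk1) ≥ ⟨gk - g*, f⟩ - (λ/2)‖f‖²`. -/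
theorem mirror_descent {L : ℕ} (G : Set (Fin L → ℝ)) (φ : (Fin L → ℝ) → ℝ)
    (hGne : G.Nonempty) (hGbd : Bornology.IsBounded G) (hGconv : Convex ℝ G)
    (hφconv : ConvexOn ℝ G φ)
    (hφclosed : IsClosed {p : (Fin L → ℝ) × ℝ | p.1 ∈ G ∧ φ p.1 ≤ p.2})
    (N : (Fin L → ℝ) → ℝ) (lam : ℝ) (hlam : 0 ≤ lam)
    (hN0 : ∀ v, 0 ≤ N v)
    (hNadd : ∀ v w, N (v + w) ≤ N v + N w)
    (hNsmul : ∀ (a : ℝ) (v : Fin L → ℝ), N (a • v) = |a| * N v)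
    (hNdef : ∀ v, N v = 0 → v = 0)
    (hsmooth : ∀ h₀ h g₀ : Fin L → ℝ,
      (∀ h', conj G φ h' - conj G φ h₀ ≥ dot g₀ (h' - h₀)) →
      conj G φ h ≤ conj G φ h₀ + dot g₀ (h - h₀) + lam / 2 * (N (h - h₀)) ^ 2)
    (gk hk gk1 hk1 f : Fin L → ℝ)
    (hgk : gk ∈ G) (hgk1 : gk1 ∈ G)
    (hpairk : FY G φ gk hk = 0) (hpairk1 : FY G φ gk1 hk1 = 0)
    (hupd : hk1 = hk - f) :
    ∀ gs ∈ G, FY G φ gs hk - FY G φ gs hk1 ≥ dot (gk - gs) f - lam / 2 * (N f) ^ 2 := by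
  -- φ is bounded below on G
  obtain ⟨m, hm⟩ : ∃ m : ℝ, ∀ g ∈ G, m ≤ φ g := by
    by_contra hcon
    push_neg at hcon
    set S : ℕ → Set (Fin L → ℝ) := fun n => {g | g ∈ G ∧ φ g ≤ -(n : ℝ)} with hS
    have hSclosed : ∀ n, IsClosed (S n) := by
      intro n
      have : S n = (fun g => (g, -(n : ℝ))) ⁻¹'
          {p : (Fin L → ℝ) × ℝ | p.1 ∈ G ∧ φ p.1 ≤ p.2} := rfl
      rw [this]
      exact hφclosed.preimage (continuous_id.prodMk continuous_const)
    have hScompact : ∀ n, IsCompact (S n) := fun n =>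
      Metric.isCompact_of_isClosed_isBounded (hSclosed n)
        (hGbd.subset (fun g hg => hg.1))
    have hSne : ∀ n, (S n).Nonempty := by
      intro n
      obtain ⟨g, hg, hlt⟩ := hcon (-(n : ℝ))
      exact ⟨g, hg, hlt.le⟩
    have hSanti : ∀ n, S (n + 1) ⊆ S n := by
      intro n g hg
      refine ⟨hg.1, hg.2.trans ?_⟩
      push_cast
      linarith
    obtain ⟨g, hg⟩ := IsCompact.nonempty_iInter_of_sequence_nonempty_isCompact_isClosed
      S hSanti hSne (hScompact 0) hSclosed
    simp only [Set.mem_iInter] at hg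
    obtain ⟨n, hn⟩ := exists_nat_gt (-(φ g))
    have h2 := (hg n).2
    linarith
  -- G is norm-bounded
  obtain ⟨r, hr⟩ : ∃ r : ℝ, ∀ g ∈ G, ‖g‖ ≤ r := hGbd.exists_norm_le
  -- the sup defining conj is over a bounded-above set
  have hbdd : ∀ h : Fin L → ℝ, BddAbove ((fun g => dot g h - φ g) '' G) := by
    intro h
    refine ⟨r * ∑ y, |h y| - m, ?_⟩
    rintro x ⟨g, hg, rfl⟩
    have h1 : dot g h ≤ r * ∑ y, |h y| := by
      calc dot g h ≤ ∑ y, |g y * h y| :=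
            Finset.sum_le_sum fun y _ => le_abs_self _
        _ = ∑ y, |g y| * |h y| := by simp [abs_mul]
        _ ≤ ∑ y, r * |h y| := by
            refine Finset.sum_le_sum fun y _ => mul_le_mul_of_nonneg_right ?_ (abs_nonneg _)
            calc |g y| = ‖g y‖ := (Real.norm_eq_abs _).symm
              _ ≤ ‖g‖ := norm_le_pi_norm g y
              _ ≤ r := hr g hg
        _ = r * ∑ y, |h y| := (Finset.mul_sum _ _ _).symm
    have h2 := hm g hg
    simp only
    linarith
  have hle : ∀ (h g : Fin L → ℝ), g ∈ G → dot g h - φ g ≤ conj G φ h := fun h g hg =>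
    le_csSup (hbdd h) ⟨g, hg, rfl⟩
  -- conjugate pair at k
  have hkeq : φ gk + conj G φ hk = dot gk hk := by
    unfold FY at hpairk; linarith
  -- gk is a subgradient of ψ at hk
  have hsub : ∀ h', conj G φ h' - conj G φ hk ≥ dot gk (h' - hk) := by
    intro h'
    have h1 := hle h' gk hgk
    rw [dot_sub_right]
    linarith
  have hsm := hsmooth hk hk1 gk hsub
  have hdiff : hk1 - hk = -f := by rw [hupd]; abel
  rw [hdiff] at hsm
  have hNnf : N (-f) = N f := by
    have h1 := hNsmul (-1) f
    simpa using h1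
  have hdotneg : dot gk (-f) = -dot gk f := by
    simp [dot, Finset.sum_neg_distrib]
  rw [hNnf, hdotneg] at hsm
  intro gs hgs
  have hexp : FY G φ gs hk - FY G φ gs hk1 =
      conj G φ hk - conj G φ hk1 - dot gs f := by
    unfold FY
    have : dot gs hk1 = dot gs hk - dot gs f := by
      rw [hupd, dot_sub_right]
    rw [this]; ring
  rw [hexp, dot_sub_left]
  linarith
end
end

section
/- The log-sum-exp function lse(h) := ln(Σ_{y=1}^L e^{h_y}) on ℝ^L is 1-smooth with respect to the ℓ∞ norm: for all h₀, h ∈ ℝ^L, lse(h) ≤ lse(h₀) + ⟨softmax(h₀), h − h₀⟩ + (1/2)·(max_{y∈[L]} |h_y − (h₀)_y|)². -/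
noncomputable section

/-- Log-sum-exp function `lse(h) = ln (∑_y e^{h_y})`. -/
def lse {L : ℕ} (h : Fin L → ℝ) : ℝ := Real.log (∑ y, Real.exp (h y))

/-- Softmax function `softmax(h)_y = e^{h_y} / ∑_z e^{h_z}`. -/
def softmax {L : ℕ} (h : Fin L → ℝ) : Fin L → ℝ :=
  fun y => Real.exp (h y) / ∑ z, Real.exp (h z)

/-!
Tilting the counting measure on `Fin L` by `h₀` gives the softmax distribution `p`, and
`lse h - lse h₀ = log 𝔼_p[exp (h - h₀)]`. Since `h - h₀` takes values in `[-M, M]` with `M` the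
`ℓ∞` distance, Hoeffding's lemma bounds this by `𝔼_p[h - h₀] + (2M)² / 8`.
-/

open Real MeasureTheory ProbabilityTheory

theorem log_integral_exp_le_of_mem_Icc {Ω : Type*} [MeasurableSpace Ω] {μ : Measure Ω}
    [IsProbabilityMeasure μ] {X : Ω → ℝ} {a b : ℝ} (hm : AEMeasurable X μ)
    (hb : ∀ᵐ ω ∂μ, X ω ∈ Set.Icc a b) :
    log (∫ ω, exp (X ω) ∂μ) ≤ μ[X] + (b - a) ^ 2 / 8 := by
  have hoeffding := (hasSubgaussianMGF_of_mem_Icc hm hb).cgf_le 1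
  have hint : Integrable (fun ω ↦ exp (X ω)) μ := by
    simpa using integrable_exp_mul_of_mem_Icc (t := 1) hm hb
  have hcgf : cgf (fun ω ↦ X ω - μ[X]) μ 1 = log (∫ ω, exp (X ω) ∂μ) - μ[X] := by
    simp only [cgf, mgf, one_mul, exp_sub, integral_div]
    rw [log_div (integral_exp_pos hint).ne' (exp_pos _).ne', log_exp]
  have hc : ((‖b - a‖₊ / 2) ^ 2 : NNReal) * (1 : ℝ) ^ 2 / 2 = (b - a) ^ 2 / 8 := by
    push_cast
    rw [Real.norm_eq_abs, div_pow, sq_abs]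
    ring
  linarith

section

variable {L : ℕ}

theorem integral_count_tilted_eq_dot_softmax (h₀ g : Fin L → ℝ) :
    ∫ y, g y ∂(Measure.count.tilted h₀) = dot (softmax h₀) g := by
  simp only [integral_tilted, integral_count, smul_eq_mul, dot, softmax]

theorem lse_eq_add_log_integral_exp_count_tilted [NeZero L] (h₀ h : Fin L → ℝ) :
    lse h = lse h₀ + log (∫ y, exp ((h - h₀) y) ∂(Measure.count.tilted h₀)) := by
  rw [integral_exp_tilted, integral_count, integral_count, add_sub_cancel,
    log_div (Finset.sum_pos (fun y _ ↦ exp_pos _) Finset.univ_nonempty).ne'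
      (Finset.sum_pos (fun y _ ↦ exp_pos _) Finset.univ_nonempty).ne']
  simp only [lse]
  ring

end

/-- The log-sum-exp function is `1`-smooth with respect to the `ℓ∞` norm:
`lse(h) ≤ lse(h₀) + ⟨softmax(h₀), h - h₀⟩ + (1/2) (max_y |h_y - (h₀)_y|)²`. -/
theorem lse_one_smooth {L : ℕ} (hL : 0 < L) (h₀ h : Fin L → ℝ) :
    lse h ≤ lse h₀ + dot (softmax h₀) (h - h₀) +
      (1 / 2) * (Finset.univ.sup' ⟨⟨0, hL⟩, Finset.mem_univ _⟩
        (fun y => |h y - h₀ y|)) ^ 2 := by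
  have : NeZero L := ⟨hL.ne'⟩
  have : IsProbabilityMeasure (Measure.count.tilted h₀) :=
    isProbabilityMeasure_tilted Integrable.of_finite
  set M := Finset.univ.sup' ⟨⟨0, hL⟩, Finset.mem_univ _⟩ (fun y => |h y - h₀ y|)
  have hbound : ∀ y, (h - h₀) y ∈ Set.Icc (-M) M :=
    fun y ↦ abs_le.mp (Finset.le_sup' (fun y => |h y - h₀ y|) (Finset.mem_univ y))
  have hoeffding := log_integral_exp_le_of_mem_Icc (μ := Measure.count.tilted h₀)
    (measurable_of_finite (h - h₀)).aemeasurable (ae_of_all _ hbound)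
  rw [integral_count_tilted_eq_dot_softmax h₀ (h - h₀)] at hoeffding
  rw [lse_eq_add_log_integral_exp_count_tilted h₀ h]
  linarith [show (M - -M) ^ 2 / 8 = 1 / 2 * M ^ 2 by ring]
end
end

section
/- The softmax function is 1-Lipschitz as a map from (ℝ^L, ℓ∞) to (ℝ^L, ℓ1): for every h, ĥ ∈ ℝ^L, Σ_{y=1}^L |softmax(h)_y − softmax(ĥ)_y| ≤ max_{y∈[L]} |h_y − ĥ_y|. -/
/-!
The ℓ1 distance between two probability vectors `p`, `q` is `2 (p(S) - q(S))` for
`S = {q ≤ p}`. If `‖h - h'‖∞ ≤ ε`, the weights `e^{h_y}` and `e^{h'_y}` agree up to a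
factor `c = e^ε`, and then the share of the total weight carried by any set `S` changes
by at most `(c - 1)/(c + 1) = tanh (ε/2) ≤ ε/2`.
-/

noncomputable section

open Finset Real

theorem Finset.sum_abs_sub_eq_two_mul_sum_filter {ι : Type*} (s : Finset ι) {p q : ι → ℝ}
    (hpq : ∑ i ∈ s, p i = ∑ i ∈ s, q i) :
    ∑ i ∈ s, |p i - q i| = 2 * ∑ i ∈ s.filter (fun i => q i ≤ p i), (p i - q i) := by
  have habs : ∀ x : ℝ, |x| = 2 * max x 0 - x := fun x => by
    rcases le_total 0 x with hx | hx
    · rw [abs_of_nonneg hx, max_eq_left hx]; ring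
    · rw [abs_of_nonpos hx, max_eq_right hx]; ring
  calc ∑ i ∈ s, |p i - q i| = ∑ i ∈ s, (2 * max (p i - q i) 0 - (p i - q i)) :=
        sum_congr rfl fun i _ => habs _
    _ = 2 * ∑ i ∈ s, max (p i - q i) 0 := by
        rw [sum_sub_distrib, ← mul_sum, sum_sub_distrib, hpq, sub_self, sub_zero]
    _ = 2 * ∑ i ∈ s.filter (fun i => q i ≤ p i), (p i - q i) := by
        rw [sum_filter]
        congr 1
        refine sum_congr rfl fun i _ => ?_
        split_ifs with hi
        · exact max_eq_left (sub_nonneg.2 hi)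
        · exact max_eq_right (by linarith [not_le.1 hi])

theorem div_add_sub_div_add_le {A B A' B' c : ℝ} (hA : 0 ≤ A) (hB : 0 ≤ B) (hc : 1 ≤ c)
    (hAA' : A ≤ c * A') (hB'B : B' ≤ c * B) (hAB : 0 < A + B) (hAB' : 0 < A' + B') :
    A / (A + B) - A' / (A' + B') ≤ (c - 1) / (c + 1) := by
  have hAcB : 0 < A + c ^ 2 * B := by
    linarith [le_mul_of_one_le_left hB (one_le_pow₀ hc (n := 2))]
  have hshare : A / (A + c ^ 2 * B) ≤ A' / (A' + B') := by
    rw [div_le_div_iff₀ hAcB hAB']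
    nlinarith [mul_le_mul_of_nonneg_left hB'B hA,
      mul_le_mul_of_nonneg_right hAA' (by positivity : 0 ≤ c * B)]
  -- The worst case `A' = A / c`, `B' = c B` reduces to AM-GM: `2 c A B ≤ A² + c² B²`.
  have hworst : A / (A + B) - A / (A + c ^ 2 * B) ≤ (c - 1) / (c + 1) := by
    rw [div_sub_div _ _ hAB.ne' hAcB.ne', div_le_div_iff₀ (by positivity) (by positivity)]
    nlinarith [mul_nonneg (sub_nonneg.2 hc) (sq_nonneg (A - c * B)), mul_nonneg hA hB]
  linarith

theorem Real.two_mul_le_log_sub_log {x : ℝ} (hx₀ : 0 ≤ x) (hx₁ : x < 1) :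
    2 * x ≤ log (1 + x) - log (1 - x) := by
  simpa using le_hasSum (hasSum_log_sub_log_of_abs_lt_one (abs_lt.2 ⟨by linarith, hx₁⟩)) 0
    fun k _ => by positivity

theorem Real.exp_sub_one_div_exp_add_one_le_half {x : ℝ} (hx : 0 ≤ x) :
    (exp x - 1) / (exp x + 1) ≤ x / 2 := by
  rw [div_le_iff₀ (by positivity)]
  rcases lt_or_ge x 2 with hx2 | hx2
  · have hpade : exp x ≤ (1 + x / 2) / (1 - x / 2) := by
      have hlog := two_mul_le_log_sub_log (x := x / 2) (by positivity) (by linarith)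
      rw [mul_div_cancel₀ x two_ne_zero] at hlog
      calc exp x ≤ exp (log (1 + x / 2) - log (1 - x / 2)) := exp_le_exp.2 hlog
        _ = (1 + x / 2) / (1 - x / 2) := by
          rw [exp_sub, exp_log (by linarith), exp_log (by linarith)]
    rw [le_div_iff₀ (by linarith)] at hpade
    nlinarith
  · nlinarith [exp_pos x]

theorem sum_softmax {L : ℕ} [NeZero L] (h : Fin L → ℝ) : ∑ y, softmax h y = 1 := by
  simp only [softmax, ← sum_div]
  exact div_self (sum_pos (fun y _ => exp_pos (h y)) univ_nonempty).ne'

theorem sum_softmax_sub_le {L : ℕ} [NeZero L] {h h' : Fin L → ℝ} {ε : ℝ}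
    (hε : ∀ y, |h y - h' y| ≤ ε) (S : Finset (Fin L)) :
    ∑ y ∈ S, (softmax h y - softmax h' y) ≤ (exp ε - 1) / (exp ε + 1) := by
  have hexp_le : ∀ y, exp (h y) ≤ exp ε * exp (h' y) ∧ exp (h' y) ≤ exp ε * exp (h y) :=
    fun y => by
      rw [← exp_add, ← exp_add, exp_le_exp, exp_le_exp]
      constructor <;> linarith [abs_le.1 (hε y)]
  simp only [softmax, sum_sub_distrib, ← sum_div, ← sum_add_sum_compl S]
  refine div_add_sub_div_add_le (sum_nonneg fun y _ => (exp_pos _).le)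
    (sum_nonneg fun y _ => (exp_pos _).le) (one_le_exp ((abs_nonneg _).trans (hε 0)))
    ?_ ?_ ?_ ?_
  · rw [mul_sum]; exact sum_le_sum fun y _ => (hexp_le y).1
  · rw [mul_sum]; exact sum_le_sum fun y _ => (hexp_le y).2
  · rw [sum_add_sum_compl]; exact sum_pos (fun y _ => exp_pos _) univ_nonempty
  · rw [sum_add_sum_compl]; exact sum_pos (fun y _ => exp_pos _) univ_nonempty

/-- Softmax is `1`-Lipschitz from `(ℝ^L, ℓ∞)` to `(ℝ^L, ℓ1)`:
`∑_y |softmax(h)_y - softmax(h')_y| ≤ max_y |h_y - h'_y|`. -/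
theorem softmax_lipschitz {L : ℕ} (hL : 0 < L) (h h' : Fin L → ℝ) :
    ∑ y, |softmax h y - softmax h' y| ≤
      Finset.univ.sup' ⟨⟨0, hL⟩, Finset.mem_univ _⟩ (fun y => |h y - h' y|) := by
  have : NeZero L := ⟨hL.ne'⟩
  set ε := univ.sup' ⟨⟨0, hL⟩, mem_univ _⟩ fun y => |h y - h' y|
  have hε : ∀ y, |h y - h' y| ≤ ε := fun y => le_sup' (fun y => |h y - h' y|) (mem_univ y)
  rw [sum_abs_sub_eq_two_mul_sum_filter univ (by rw [sum_softmax, sum_softmax])]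
  linarith [sum_softmax_sub_le hε (univ.filter fun y => softmax h' y ≤ softmax h y),
    exp_sub_one_div_exp_add_one_le_half ((abs_nonneg _).trans (hε 0))]
end
end

section
/- Let X be a finite set, μ a probability distribution on X, φ : Δ_L → ℝ convex with a fixed choice of subgradient ∇φ(v) at each v ∈ Δ_L, and ε ≥ 0. For all functions g, g*, s : X → Δ_L, if ⟨s − g*, ∇φ∘g⟩_μ ≥ −ε, then H_φ(s) − H_φ(g*) ≤ D_φ(g*‖g) + ε. (This is the information-theoretic core of the converse direction of the unified pseudoentropy characterization: any simulator s that cannot be distinguished from g* by the weight function ∇φ∘g has entropy gap bounded by the D_φ-approximation error of g.) -/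
noncomputable section

/-- The probability simplex `Δ_L ⊆ ℝ^L`. -/
def simplex (L : ℕ) : Set (Fin L → ℝ) :=
  {v | (∀ y, 0 ≤ v y) ∧ ∑ y, v y = 1}

/-- `⟨g,h⟩_μ = E_{x∼μ}[⟨g(x),h(x)⟩]` for functions on a finite domain. -/
def innerMu {X : Type*} [Fintype X] {L : ℕ} (μ : X → ℝ)
    (g h : X → Fin L → ℝ) : ℝ := ∑ x, μ x * dot (g x) (h x)

/-- Entropy `H_φ(g) = -E_{x∼μ}[φ(g(x))]`. -/
def Hent {X : Type*} [Fintype X] {L : ℕ} (μ : X → ℝ)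
    (φ : (Fin L → ℝ) → ℝ) (g : X → Fin L → ℝ) : ℝ := -∑ x, μ x * φ (g x)

/-- Bregman divergence
`D_φ(g*‖g) = E_{x∼μ}[φ(g*(x)) - φ(g(x)) - ⟨g*(x) - g(x), ∇φ(g(x))⟩]`. -/
def Dbreg {X : Type*} [Fintype X] {L : ℕ} (μ : X → ℝ)
    (φ : (Fin L → ℝ) → ℝ) (gradφ : (Fin L → ℝ) → Fin L → ℝ)
    (gs g : X → Fin L → ℝ) : ℝ :=
  ∑ x, μ x * (φ (gs x) - φ (g x) - dot (gs x - g x) (gradφ (g x)))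

/-- Converse direction core: if `⟨s - g*, ∇φ∘g⟩_μ ≥ -ε` then
`H_φ(s) - H_φ(g*) ≤ D_φ(g*‖g) + ε`. -/
theorem entropy_gap_le_of_indistinguishable {X : Type*} [Fintype X] {L : ℕ}
    (μ : X → ℝ) (hμ0 : ∀ x, 0 ≤ μ x) (hμ1 : ∑ x, μ x = 1)
    (φ : (Fin L → ℝ) → ℝ) (hφconv : ConvexOn ℝ (simplex L) φ)
    (gradφ : (Fin L → ℝ) → Fin L → ℝ)
    (hgrad : ∀ v ∈ simplex L, ∀ u ∈ simplex L, φ u - φ v ≥ dot (u - v) (gradφ v))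
    (ε : ℝ) (hε : 0 ≤ ε)
    (g gs s : X → Fin L → ℝ)
    (hg : ∀ x, g x ∈ simplex L) (hgs : ∀ x, gs x ∈ simplex L)
    (hs : ∀ x, s x ∈ simplex L)
    (hind : innerMu μ (fun x => s x - gs x) (fun x => gradφ (g x)) ≥ -ε) :
    Hent μ φ s - Hent μ φ gs ≤ Dbreg μ φ gradφ gs g + ε := by
  have key : ∀ x : X, μ x * (φ (gs x) - φ (s x)) ≤
      μ x * (φ (gs x) - φ (g x) - dot (gs x - g x) (gradφ (g x)))
      - μ x * dot (s x - gs x) (gradφ (g x)) := by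
    intro x
    have h1 := hgrad (g x) (hg x) (s x) (hs x)
    have hdot : dot (gs x - g x) (gradφ (g x)) + dot (s x - gs x) (gradφ (g x))
        = dot (s x - g x) (gradφ (g x)) := by
      simp only [dot, ← Finset.sum_add_distrib]
      refine Finset.sum_congr rfl fun y _ => ?_
      simp only [Pi.sub_apply]; ring
    nlinarith [hμ0 x]
  have hsum : ∑ x : X, μ x * (φ (gs x) - φ (s x)) ≤
      ∑ x : X, (μ x * (φ (gs x) - φ (g x) - dot (gs x - g x) (gradφ (g x)))
        - μ x * dot (s x - gs x) (gradφ (g x))) :=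
    Finset.sum_le_sum fun x _ => key x
  have hL : Hent μ φ s - Hent μ φ gs = ∑ x : X, μ x * (φ (gs x) - φ (s x)) := by
    simp only [Hent, Finset.sum_sub_distrib, mul_sub]; ring
  have hR : ∑ x : X, (μ x * (φ (gs x) - φ (g x) - dot (gs x - g x) (gradφ (g x)))
        - μ x * dot (s x - gs x) (gradφ (g x)))
      = Dbreg μ φ gradφ gs g
        - innerMu μ (fun x => s x - gs x) (fun x => gradφ (g x)) := by
    simp [Dbreg, innerMu, Finset.sum_sub_distrib]
  linarith [hsum, hind]
end
end

section
/- (Existence of a large combinatorial design.) There exists a constant c > 0 such that for every sufficiently large positive integer n there exist m ≥ e^{cn} distinct subsets S_1, …, S_m of {1,…,n} satisfying: (i) |S_i| ≥ n/16 for every i; (ii) |S_i ∩ S_j| ≤ n/128 for all distinct i, j; and (iii) |S_i| is even for every i. -/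
open Finset in
theorem my_greedy {W : Type*} [DecidableEq W] [Fintype W] (R : W → W → Prop) [DecidableRel R]
    (hsym : ∀ a b, R a b → R b a) (hrefl : ∀ a, R a a) (B : ℕ) (hB1 : 1 ≤ B)
    (hB : ∀ a, (univ.filter (R a)).card ≤ B) :
    ∀ m, m * B ≤ Fintype.card W →
      ∃ T : Finset W, T.card = m ∧ ∀ a ∈ T, ∀ b ∈ T, a ≠ b → ¬ R a b := by
  intro m
  induction m with
  | zero => intro _; exact ⟨∅, by simp, by simp⟩
  | succ m ih =>
    intro hm
    obtain ⟨T, hTc, hTg⟩ := ih (le_trans (by nlinarith) hm)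
    set bad : Finset W := T.biUnion (fun a => univ.filter (R a)) with hbad
    have hcard : bad.card ≤ m * B := by
      calc bad.card ≤ ∑ a ∈ T, (univ.filter (R a)).card := Finset.card_biUnion_le
        _ ≤ ∑ _a ∈ T, B := Finset.sum_le_sum (fun a _ => hB a)
        _ = m * B := by rw [Finset.sum_const, hTc, smul_eq_mul]
    have hlt : bad.card < Fintype.card W := lt_of_lt_of_le (by nlinarith) hm
    have hne : bad ≠ univ := by
      intro h
      rw [h, Finset.card_univ] at hlt
      exact lt_irrefl _ hlt
    obtain ⟨w, hw⟩ : ∃ w, w ∉ bad := by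
      by_contra h
      push_neg at h
      exact hne (Finset.eq_univ_iff_forall.2 h)
    have hwT : w ∉ T := by
      intro hwt
      exact hw (Finset.mem_biUnion.2 ⟨w, hwt, by simp [hrefl w]⟩)
    refine ⟨insert w T, by rw [Finset.card_insert_of_notMem hwT, hTc], ?_⟩
    intro a ha b hb hab
    rcases Finset.mem_insert.1 ha with rfl | ha'
    · rcases Finset.mem_insert.1 hb with rfl | hb'
      · exact absurd rfl hab
      · intro hR
        exact hw (Finset.mem_biUnion.2 ⟨b, hb', by simp [hsym _ _ hR]⟩)
    · rcases Finset.mem_insert.1 hb with rfl | hb'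
      · intro hR
        exact hw (Finset.mem_biUnion.2 ⟨a, ha', by simp [hR]⟩)
      · exact hTg a ha' b hb' hab

open Finset in
theorem my_sum_pow_agree (b : ℕ) (f : Fin b → Fin 14) :
    ∑ g : Fin b → Fin 14, (2:ℝ) ^ (univ.filter fun j => f j = g j).card = 15 ^ b := by
  have h1 : ∀ g : Fin b → Fin 14,
      (2:ℝ) ^ (univ.filter fun j => f j = g j).card
        = ∏ j : Fin b, (if f j = g j then (2:ℝ) else 1) := by
    intro g
    rw [Finset.card_filter, ← Finset.prod_pow_eq_pow_sum]
    apply Finset.prod_congr rfl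
    intro j _
    by_cases h : f j = g j <;> simp [h]
  simp only [h1]
  rw [← Fintype.prod_sum (fun (j : Fin b) (v : Fin 14) => if f j = v then (2:ℝ) else 1)]
  have h2 : ∀ j : Fin b, ∑ v : Fin 14, (if f j = v then (2:ℝ) else 1) = 15 := by
    intro j
    have : ∀ v : Fin 14, (if f j = v then (2:ℝ) else 1) = 1 + (if f j = v then (1:ℝ) else 0) := by
      intro v; by_cases h : f j = v <;> simp [h] <;> norm_num
    simp only [this, Finset.sum_add_distrib, Finset.sum_ite_eq]
    simp
    norm_num
  simp [h2]

open Finset in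
theorem my_bad_card (b t : ℕ) (f : Fin b → Fin 14) :
    ((univ.filter fun g : Fin b → Fin 14 =>
        t ≤ (univ.filter fun j => f j = g j).card).card : ℝ) * 2 ^ t ≤ 15 ^ b := by
  calc ((univ.filter fun g : Fin b → Fin 14 =>
        t ≤ (univ.filter fun j => f j = g j).card).card : ℝ) * 2 ^ t
      = ∑ _g ∈ (univ.filter fun g : Fin b → Fin 14 =>
          t ≤ (univ.filter fun j => f j = g j).card), (2:ℝ) ^ t := by
        rw [Finset.sum_const, nsmul_eq_mul]
    _ ≤ ∑ g ∈ (univ.filter fun g : Fin b → Fin 14 =>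
          t ≤ (univ.filter fun j => f j = g j).card),
            (2:ℝ) ^ (univ.filter fun j => f j = g j).card := by
        apply Finset.sum_le_sum
        intro g hg
        exact pow_le_pow_right₀ one_le_two (Finset.mem_filter.1 hg).2
    _ ≤ ∑ g : Fin b → Fin 14, (2:ℝ) ^ (univ.filter fun j => f j = g j).card := by
        apply Finset.sum_le_sum_of_subset_of_nonneg (Finset.filter_subset _ _)
        intro g _ _
        positivity
    _ = 15 ^ b := my_sum_pow_agree b f

theorem my_key (n b t : ℕ) (hn : 100000 ≤ n) (hb : 14 * b ≤ n) (ht : (n:ℝ)/128 ≤ (t:ℝ)) :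
    4 * Real.exp ((1/10000) * n) * 15 ^ b ≤ 14 ^ b * 2 ^ t := by
  have hn' : (100000:ℝ) ≤ n := by exact_mod_cast hn
  have hb' : 14 * (b:ℝ) ≤ n := by exact_mod_cast hb
  -- 15^b = 14^b * (15/14)^b
  have h14 : (0:ℝ) < 14 ^ b := by positivity
  rw [show (15:ℝ) = 14 * (15/14) by norm_num, mul_pow]
  rw [show (4:ℝ) * Real.exp ((1/10000) * n) * (14 ^ b * (15/14) ^ b)
      = 14 ^ b * (4 * Real.exp ((1/10000) * n) * (15/14) ^ b) by ring]
  apply mul_le_mul_of_nonneg_left _ (le_of_lt h14)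
  -- bound (15/14)^b ≤ exp(b/14)
  have h1 : ((15:ℝ)/14) ^ b ≤ Real.exp ((b:ℝ)/14) := by
    calc ((15:ℝ)/14) ^ b ≤ (Real.exp (1/14)) ^ b := by
          apply pow_le_pow_left₀ (by norm_num)
          have := Real.add_one_le_exp ((1:ℝ)/14)
          linarith
      _ = Real.exp ((b:ℝ)/14) := by
          rw [← Real.exp_nat_mul]; ring_nf
  have h2 : (4:ℝ) ≤ Real.exp 1.39 := by
    have h4 : (4:ℝ) = Real.exp (Real.log 4) := (Real.exp_log (by norm_num)).symm
    rw [h4]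
    apply Real.exp_le_exp.2
    have : Real.log 4 = 2 * Real.log 2 := by
      rw [show (4:ℝ) = 2^2 by norm_num, Real.log_pow]; push_cast; ring
    rw [this]
    have := Real.log_two_lt_d9
    nlinarith
  have h3 : Real.exp ((t:ℝ) * Real.log 2) ≤ (2:ℝ) ^ t := by
    rw [Real.exp_nat_mul, Real.exp_log (by norm_num : (0:ℝ) < 2)]
  calc (4:ℝ) * Real.exp ((1/10000) * n) * (15/14) ^ b
      ≤ Real.exp 1.39 * Real.exp ((1/10000) * n) * Real.exp ((b:ℝ)/14) := by
        apply mul_le_mul (mul_le_mul h2 le_rfl (le_of_lt (Real.exp_pos _)) (le_of_lt (Real.exp_pos _))) h1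
        · positivity
        · positivity
    _ = Real.exp (1.39 + (1/10000) * n + (b:ℝ)/14) := by
        rw [← Real.exp_add, ← Real.exp_add]
    _ ≤ Real.exp ((t:ℝ) * Real.log 2) := by
        apply Real.exp_le_exp.2
        have hlog := Real.log_two_gt_d9
        have hbn : (b:ℝ)/14 ≤ (n:ℝ)/196 := by linarith
        have htl : (n:ℝ)/128 * Real.log 2 ≤ (t:ℝ) * Real.log 2 := by
          apply mul_le_mul_of_nonneg_right ht
          linarith [Real.log_pos (by norm_num : (1:ℝ) < 2)]
        nlinarith
    _ ≤ (2:ℝ) ^ t := h3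

noncomputable section

open Finset in
/-- Existence of a large combinatorial design: for some constant `c > 0` and all
sufficiently large `n`, there are `m ≥ e^{cn}` distinct subsets of `{1,…,n}`, each of
even cardinality at least `n/16`, with pairwise intersections of size at most `n/128`. -/
theorem exists_large_design :
    ∃ c : ℝ, 0 < c ∧ ∃ n₀ : ℕ, ∀ n : ℕ, n₀ ≤ n →
      ∃ m : ℕ, Real.exp (c * n) ≤ (m : ℝ) ∧
        ∃ S : Fin m → Finset (Fin n),
          Function.Injective S ∧
          (∀ i, (n : ℝ) / 16 ≤ ((S i).card : ℝ)) ∧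
          (∀ i j, i ≠ j → (((S i ∩ S j).card : ℝ)) ≤ (n : ℝ) / 128) ∧
          (∀ i, Even (S i).card) := by
  refine ⟨1/10000, by norm_num, 100000, ?_⟩
  intro n hn
  set b : ℕ := 2 * (n / 28) with hbdef
  set t : ℕ := n / 128 + 1 with htdef
  have h28 := Nat.div_add_mod n 28
  have h28' : n % 28 < 28 := Nat.mod_lt _ (by norm_num)
  have h128 := Nat.div_add_mod n 128
  have h128' : n % 128 < 128 := Nat.mod_lt _ (by omega)
  have hb14 : 14 * b ≤ n := by omega
  have hb16 : n ≤ 16 * b := by omega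
  have htb : t ≤ b := by omega
  have hbeven : Even b := ⟨n / 28, by omega⟩
  have hn' : (100000:ℝ) ≤ (n:ℝ) := by exact_mod_cast hn
  have ht' : (n:ℝ)/128 ≤ (t:ℝ) := by
    have h : (n:ℝ) < 128 * (t:ℝ) := by exact_mod_cast (show n < 128 * t by omega)
    linarith
  -- the bound B on bad neighborhoods
  set B : ℕ := ⌈(15:ℝ) ^ b / 2 ^ t⌉₊ with hBdef
  have h2t : (0:ℝ) < 2 ^ t := by positivity
  have hxpos : (0:ℝ) < (15:ℝ) ^ b / 2 ^ t := by positivity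
  have hB1 : 1 ≤ B := Nat.one_le_ceil_iff.2 hxpos
  have hx1 : (1:ℝ) ≤ (15:ℝ) ^ b / 2 ^ t := by
    rw [le_div_iff₀ h2t, one_mul]
    calc (2:ℝ) ^ t ≤ 2 ^ b := by
          apply pow_le_pow_right₀ one_le_two htb
      _ ≤ 15 ^ b := by
          apply pow_le_pow_left₀ (by norm_num) (by norm_num)
  have hBle : (B:ℝ) ≤ 2 * ((15:ℝ) ^ b / 2 ^ t) := by
    have := Nat.ceil_lt_add_one (le_of_lt hxpos)
    rw [hBdef]
    push_cast
    linarith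
  -- m
  set m : ℕ := ⌈Real.exp ((1/10000) * (n:ℝ))⌉₊ with hmdef
  have hexp1 : (1:ℝ) ≤ Real.exp ((1/10000) * (n:ℝ)) := by
    rw [← Real.exp_zero]
    apply Real.exp_le_exp.2
    positivity
  have hm1 : Real.exp ((1/10000) * (n:ℝ)) ≤ (m:ℝ) := Nat.le_ceil _
  have hmle : (m:ℝ) ≤ 2 * Real.exp ((1/10000) * (n:ℝ)) := by
    have := Nat.ceil_lt_add_one (le_trans zero_le_one hexp1)
    rw [hmdef]
    linarith
  -- the greedy application
  have hWcard : Fintype.card (Fin b → Fin 14) = 14 ^ b := by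
    simp [Fintype.card_fun]
  have hmB : m * B ≤ Fintype.card (Fin b → Fin 14) := by
    rw [hWcard]
    have key := my_key n b t hn hb14 ht'
    have hreal : (m:ℝ) * (B:ℝ) ≤ (14:ℝ) ^ b := by
      calc (m:ℝ) * (B:ℝ) ≤ (2 * Real.exp ((1/10000) * (n:ℝ))) * (2 * ((15:ℝ) ^ b / 2 ^ t)) := by
            apply mul_le_mul hmle hBle (by positivity) (by positivity)
        _ = 4 * Real.exp ((1/10000) * (n:ℝ)) * 15 ^ b / 2 ^ t := by ring
        _ ≤ 14 ^ b * 2 ^ t / 2 ^ t := by gcongr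
        _ = 14 ^ b := by field_simp
    exact_mod_cast hreal
  obtain ⟨T, hTc, hTg⟩ := my_greedy
    (fun f g : Fin b → Fin 14 => t ≤ (univ.filter fun j => f j = g j).card)
    (fun f g h => by
      show t ≤ _
      have h' : t ≤ (univ.filter fun j => f j = g j).card := h
      clear h
      have : (univ.filter fun j => f j = g j) = (univ.filter fun j => g j = f j) := by
        apply Finset.filter_congr
        intro j _
        exact ⟨Eq.symm, Eq.symm⟩
      rwa [this] at h')
    (fun f => by
      show t ≤ _
      have : (univ.filter fun j => f j = f j) = (univ : Finset (Fin b)) := by simp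
      rw [this, Finset.card_univ, Fintype.card_fin]
      exact htb)
    B hB1
    (fun f => by
      show (univ.filter fun g : Fin b → Fin 14 =>
          t ≤ (univ.filter fun j => f j = g j).card).card ≤ B
      have hbc := my_bad_card b t f
      have : ((univ.filter fun g : Fin b → Fin 14 =>
          t ≤ (univ.filter fun j => f j = g j).card).card : ℝ) ≤ (15:ℝ) ^ b / 2 ^ t := by
        rw [le_div_iff₀ h2t]
        exact hbc
      have h2 := le_trans this (Nat.le_ceil ((15:ℝ) ^ b / 2 ^ t))
      exact Nat.cast_le.mp h2)
    m hmB
  -- the embedding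
  have hjn : ∀ (j : Fin b) (v : Fin 14), 14 * j.val + v.val < n := by
    intro j v
    have := j.isLt
    have := v.isLt
    omega
  set e : Fin b → Fin 14 → Fin n := fun j v => ⟨14 * j.val + v.val, hjn j v⟩ with hedef
  have he : ∀ j v j' v', e j v = e j' v' → j = j' ∧ v = v' := by
    intro j v j' v' h
    have h' : 14 * j.val + v.val = 14 * j'.val + v'.val := congrArg Fin.val h
    have := v.isLt
    have := v'.isLt
    constructor
    · exact Fin.ext (by omega)
    · exact Fin.ext (by omega)
  set mk : (Fin b → Fin 14) → Finset (Fin n) :=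
    fun w => Finset.image (fun j => e j (w j)) univ with hmkdef
  have hinjw : ∀ w : Fin b → Fin 14, Function.Injective (fun j => e j (w j)) := by
    intro w j j' h
    exact (he _ _ _ _ h).1
  have hcardmk : ∀ w, (mk w).card = b := by
    intro w
    rw [hmkdef]
    simp only
    rw [Finset.card_image_of_injective _ (hinjw w), Finset.card_univ, Fintype.card_fin]
  have hinter : ∀ w w', (mk w ∩ mk w').card = (univ.filter fun j => w j = w' j).card := by
    intro w w'
    have hset : mk w ∩ mk w' = Finset.image (fun j => e j (w j))
        (univ.filter fun j => w j = w' j) := by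
      ext x
      simp only [hmkdef, Finset.mem_inter, Finset.mem_image, Finset.mem_filter,
        Finset.mem_univ, true_and]
      constructor
      · rintro ⟨⟨j, rfl⟩, ⟨j', hj'⟩⟩
        obtain ⟨rfl, hv⟩ := he _ _ _ _ hj'.symm
        exact ⟨j, hv, rfl⟩
      · rintro ⟨j, hj, rfl⟩
        exact ⟨⟨j, rfl⟩, ⟨j, by rw [hj]⟩⟩
    rw [hset, Finset.card_image_of_injective _ (hinjw w)]
  have hmkinj : Function.Injective mk := by
    intro w w' h
    funext j
    have hx : e j (w j) ∈ mk w' := by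
      rw [← h, hmkdef]
      exact Finset.mem_image.2 ⟨j, Finset.mem_univ j, rfl⟩
    rw [hmkdef] at hx
    obtain ⟨j', _, hj'⟩ := Finset.mem_image.1 hx
    obtain ⟨rfl, hv⟩ := he _ _ _ _ hj'
    exact hv.symm
  -- build S
  set σ : Fin m → {x // x ∈ T} := fun i => T.equivFin.symm (Fin.cast hTc.symm i) with hσdef
  have hσinj : Function.Injective (fun i => ((σ i : {x // x ∈ T}) : Fin b → Fin 14)) := by
    intro i j h
    have : σ i = σ j := Subtype.ext h
    rw [hσdef] at this
    simpa using congrArg (fun x => Fin.cast hTc (T.equivFin x)) this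
  refine ⟨m, hm1, ?_⟩
  refine ⟨fun i => mk ((σ i : {x // x ∈ T}) : Fin b → Fin 14), ?_, ?_, ?_, ?_⟩
  · intro i j h
    exact hσinj (hmkinj h)
  · intro i
    rw [hcardmk]
    have : (n:ℝ) ≤ 16 * (b:ℝ) := by exact_mod_cast hb16
    linarith
  · intro i j hij
    rw [hinter]
    have hne : ((σ i : {x // x ∈ T}) : Fin b → Fin 14) ≠ ((σ j : {x // x ∈ T}) : Fin b → Fin 14) :=
      fun h => hij (hσinj h)
    have hgood := hTg _ (σ i).2 _ (σ j).2 hne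
    have hlt : (univ.filter fun k => ((σ i : {x // x ∈ T}) : Fin b → Fin 14) k
        = ((σ j : {x // x ∈ T}) : Fin b → Fin 14) k).card ≤ n / 128 := by omega
    have hc : ((n / 128 : ℕ) : ℝ) ≤ (n:ℝ) / 128 := by
      have : 128 * (n / 128) ≤ n := by omega
      have h2 : (128:ℝ) * ((n / 128 : ℕ) : ℝ) ≤ (n:ℝ) := by exact_mod_cast this
      linarith
    calc ((univ.filter fun k => ((σ i : {x // x ∈ T}) : Fin b → Fin 14) k
        = ((σ j : {x // x ∈ T}) : Fin b → Fin 14) k).card : ℝ) ≤ ((n / 128 : ℕ) : ℝ) := by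
          exact_mod_cast hlt
      _ ≤ (n:ℝ) / 128 := hc
  · intro i
    rw [hcardmk]
    exact hbeven
end
end

section
/- (Entropy bound for the lower-bound construction.) Let L be a positive integer, α ∈ (0,1], and X' a finite nonempty set. For each x ∈ X', let S_x^0, S_x^1 ⊆ {1,…,L} be disjoint sets with |S_x^0| = |S_x^1| ≥ 1 and |S_x^0| + |S_x^1| ≥ αL, and assume that for all distinct x, x' ∈ X', |(S_x^0 ∪ S_x^1) ∩ (S_{x'}^0 ∪ S_{x'}^1)| ≤ 2α²L. Let η : X' → {0,1}, and for each x ∈ X' let g*(x) ∈ Δ_L be the uniform distribution on S_x^{η(x)}. Then E_{x'∼Unif(X')}[ max_{x∈X'} Σ_{y ∈ S_x^{1−η(x)}} g*(x')_y ] ≤ 4α. -/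
noncomputable section

/-- Entropy bound for the lower-bound construction: if the supports `S_x = S_x^0 ∪ S_x^1`
form a design (each of size `≥ αL`, pairwise intersections `≤ 2α²L`, halves of equal
size), and `g*(x)` is uniform on `S_x^{η(x)}`, then
`E_{x'∼Unif(X')}[max_{x∈X'} ∑_{y∈S_x^{1-η(x)}} g*(x')_y] ≤ 4α`. -/
theorem entropy_bound_lower_bound_construction {L : ℕ} (hL : 0 < L)
    (α : ℝ) (hα0 : 0 < α) (hα1 : α ≤ 1)
    {X' : Type*} [Fintype X'] [Nonempty X']
    (S : X' → Bool → Finset (Fin L))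
    (hdisj : ∀ x, Disjoint (S x false) (S x true))
    (hcardeq : ∀ x, (S x false).card = (S x true).card)
    (hcard1 : ∀ x b, 1 ≤ (S x b).card)
    (hcardα : ∀ x, α * (L : ℝ) ≤ (((S x false).card : ℝ) + ((S x true).card : ℝ)))
    (hint : ∀ x x', x ≠ x' →
      ((((S x false ∪ S x true) ∩ (S x' false ∪ S x' true)).card : ℝ)) ≤
        2 * α ^ 2 * (L : ℝ))
    (η : X' → Bool)
    (gs : X' → Fin L → ℝ)
    (hgs : ∀ x y, gs x y =
      if y ∈ S x (η x) then (1 : ℝ) / ((S x (η x)).card : ℝ) else 0) :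
    (∑ x' : X', Finset.univ.sup' Finset.univ_nonempty
        (fun x : X' => ∑ y ∈ S x (!η x), gs x' y)) / (Fintype.card X' : ℝ) ≤ 4 * α := by
  classical
  -- rewrite the inner sum
  have hsum : ∀ x x' : X', ∑ y ∈ S x (!η x), gs x' y =
      ((S x (!η x) ∩ S x' (η x')).card : ℝ) / ((S x' (η x')).card : ℝ) := by
    intro x x'
    simp_rw [hgs]
    rw [Finset.sum_ite_mem]
    rw [Finset.sum_const, nsmul_eq_mul]
    ring
  have hcpos : ∀ x' : X', (0:ℝ) < ((S x' (η x')).card : ℝ) := by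
    intro x'
    exact_mod_cast Nat.lt_of_lt_of_le Nat.zero_lt_one (hcard1 x' (η x'))
  have hchalf : ∀ x' : X', α * L ≤ 2 * ((S x' (η x')).card : ℝ) := by
    intro x'
    have h1 := hcardα x'
    have h2 : ((S x' false).card : ℝ) = ((S x' true).card : ℝ) := by
      exact_mod_cast hcardeq x'
    cases hb : η x' <;> linarith
  have hkey : ∀ x x' : X', (∑ y ∈ S x (!η x), gs x' y) ≤ 4 * α := by
    intro x x'
    rw [hsum]
    rw [div_le_iff₀ (hcpos x')]
    by_cases hxx : x = x'
    · subst hxx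
      have : S x (!η x) ∩ S x (η x) = ∅ := by
        cases hb : η x <;> simp only [hb, Bool.not_true, Bool.not_false] <;>
          [exact Finset.disjoint_iff_inter_eq_empty.mp (hdisj x).symm;
           exact Finset.disjoint_iff_inter_eq_empty.mp (hdisj x)]
      rw [this]
      simp only [Finset.card_empty, Nat.cast_zero]
      positivity
    · have h1 : ((S x (!η x) ∩ S x' (η x')).card : ℝ) ≤
          (((S x false ∪ S x true) ∩ (S x' false ∪ S x' true)).card : ℝ) := by
        have hsub : S x (!η x) ∩ S x' (η x') ⊆
            (S x false ∪ S x true) ∩ (S x' false ∪ S x' true) := by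
          apply Finset.inter_subset_inter
          · cases !η x <;> simp [Finset.subset_union_left, Finset.subset_union_right]
          · cases η x' <;> simp [Finset.subset_union_left, Finset.subset_union_right]
        exact_mod_cast Finset.card_le_card hsub
      have h2 := hint x x' hxx
      have h3 := hchalf x'
      nlinarith [hcpos x', hα0]
  have hsup : ∀ x' : X', Finset.univ.sup' Finset.univ_nonempty
      (fun x : X' => ∑ y ∈ S x (!η x), gs x' y) ≤ 4 * α := by
    intro x'
    apply Finset.sup'_le
    intro x _
    exact hkey x x'
  have hN : (0:ℝ) < (Fintype.card X' : ℝ) := by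
    exact_mod_cast Fintype.card_pos
  rw [div_le_iff₀ hN]
  calc (∑ x' : X', Finset.univ.sup' Finset.univ_nonempty
        (fun x : X' => ∑ y ∈ S x (!η x), gs x' y))
      ≤ ∑ _x' : X', 4 * α := Finset.sum_le_sum (fun x' _ => hsup x')
    _ = 4 * α * (Fintype.card X' : ℝ) := by
        rw [Finset.sum_const, nsmul_eq_mul, Finset.card_univ]; ring
end
end

section
/- (Information-theoretic heart of the exponential lower bound.) Let L be a positive integer, α = 1/16, and X' a finite nonempty set. For each x ∈ X', let S_x^0, S_x^1 ⊆ {1,…,L} be disjoint sets with |S_x^0| = |S_x^1| ≥ 1 and |S_x^0| + |S_x^1| ≥ αL, and assume |(S_x^0 ∪ S_x^1) ∩ (S_{x'}^0 ∪ S_{x'}^1)| ≤ 2α²L for all distinct x, x' ∈ X'. Let η : X' → {0,1}, let g*(x) ∈ Δ_L be the uniform distribution on S_x^{η(x)}, and define the convex function φ(v) := max_{x∈X'} Σ_{y∈S_x^{1−η(x)}} v_y on Δ_L. Suppose s : X' → Δ_L satisfies: (i) indistinguishability from g* by the identity distinguisher, |E_{x∼Unif(X')}[ Σ_{y ∈ S_x^0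 ∪ S_x^1} (s(x)_y − g*(x)_y) ]| ≤ 0.05, and (ii) the entropy condition E_{x∼Unif(X')}[φ(s(x))] ≤ E_{x∼Unif(X')}[φ(g*(x))] + 0.05. Then E_{x∼Unif(X')}[ Σ_{y ∈ S_x^{η(x)}} s(x)_y ] ≥ 0.6. -/
noncomputable section

/-- Information-theoretic heart of the exponential lower bound (with `α = 1/16`):
if `s : X' → Δ_L` is indistinguishable from `g*` by the identity distinguisher
(condition (i)) and has entropy almost as high as `g*` w.r.t.
`φ(v) = max_{x∈X'} ∑_{y∈S_x^{1-η(x)}} v_y` (condition (ii)), then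
`E_{x∼Unif(X')}[∑_{y∈S_x^{η(x)}} s(x)_y] ≥ 0.6`. -/
theorem lower_bound_heart {L : ℕ} (hL : 0 < L)
    {X' : Type*} [Fintype X'] [Nonempty X']
    (S : X' → Bool → Finset (Fin L))
    (hdisj : ∀ x, Disjoint (S x false) (S x true))
    (hcardeq : ∀ x, (S x false).card = (S x true).card)
    (hcard1 : ∀ x b, 1 ≤ (S x b).card)
    (hcardα : ∀ x, (1 / 16 : ℝ) * (L : ℝ) ≤
      (((S x false).card : ℝ) + ((S x true).card : ℝ)))
    (hint : ∀ x x', x ≠ x' →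
      ((((S x false ∪ S x true) ∩ (S x' false ∪ S x' true)).card : ℝ)) ≤
        2 * (1 / 16 : ℝ) ^ 2 * (L : ℝ))
    (η : X' → Bool)
    (gs : X' → Fin L → ℝ)
    (hgs : ∀ x y, gs x y =
      if y ∈ S x (η x) then (1 : ℝ) / ((S x (η x)).card : ℝ) else 0)
    (s : X' → Fin L → ℝ) (hs : ∀ x, s x ∈ simplex L)
    (hind : |(∑ x : X', ∑ y ∈ S x false ∪ S x true, (s x y - gs x y)) /
      (Fintype.card X' : ℝ)| ≤ 0.05)
    (hent : (∑ x : X', Finset.univ.sup' Finset.univ_nonempty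
          (fun x'' : X' => ∑ y ∈ S x'' (!η x''), s x y)) / (Fintype.card X' : ℝ) ≤
        (∑ x : X', Finset.univ.sup' Finset.univ_nonempty
          (fun x'' : X' => ∑ y ∈ S x'' (!η x''), gs x y)) / (Fintype.card X' : ℝ) + 0.05) :
    (0.6 : ℝ) ≤ (∑ x : X', ∑ y ∈ S x (η x), s x y) / (Fintype.card X' : ℝ) := by
  have hN0 : (0:ℝ) < (Fintype.card X' : ℝ) := by
    exact_mod_cast Fintype.card_pos
  set N : ℝ := (Fintype.card X' : ℝ) with hNdef
  -- disjointness between the !η and η parts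
  have hηdisj : ∀ x, Disjoint (S x (!η x)) (S x (η x)) := by
    intro x; cases hη : η x
    · simpa [hη] using (hdisj x).symm
    · simpa [hη] using hdisj x
  have hm_pos : ∀ x, (0:ℝ) < ((S x (η x)).card : ℝ) := by
    intro x; exact_mod_cast hcard1 x (η x)
  have hsubU : ∀ (x : X') (b : Bool), S x b ⊆ S x false ∪ S x true := by
    intro x b; cases b
    · exact Finset.subset_union_left
    · exact Finset.subset_union_right
  -- g* sums to 1 on its support
  have hg1 : ∀ x, ∑ y ∈ S x (η x), gs x y = 1 := by
    intro x
    have h : ∀ y ∈ S x (η x), gs x y = 1 / ((S x (η x)).card : ℝ) := by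
      intro y hy; rw [hgs, if_pos hy]
    rw [Finset.sum_congr rfl h, Finset.sum_const, nsmul_eq_mul, mul_one_div,
      div_self (ne_of_gt (hm_pos x))]
  -- g* puts no mass on the wrong side
  have hg0 : ∀ x, ∑ y ∈ S x (!η x), gs x y = 0 := by
    intro x
    apply Finset.sum_eq_zero
    intro y hy
    rw [hgs, if_neg (Finset.disjoint_left.mp (hηdisj x) hy)]
  -- g* sums to 1 on the union
  have hgU : ∀ x, ∑ y ∈ S x false ∪ S x true, gs x y = 1 := by
    intro x
    rw [Finset.sum_union (hdisj x)]
    have h1 := hg1 x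
    have h0 := hg0 x
    cases hη : η x <;> rw [hη] at h1 h0 <;> simp at h1 h0 <;> linarith
  -- min support size
  have hm : ∀ x, (L:ℝ)/32 ≤ ((S x (η x)).card : ℝ) := by
    intro x
    have h := hcardα x
    have he : ((S x false).card : ℝ) = ((S x true).card : ℝ) := by
      exact_mod_cast hcardeq x
    cases hη : η x <;> linarith
  -- the sup for g* is at most 1/4
  have hsupg : ∀ x, Finset.univ.sup' Finset.univ_nonempty
      (fun x'' : X' => ∑ y ∈ S x'' (!η x''), gs x y) ≤ (1/4 : ℝ) := by
    intro x
    apply Finset.sup'_le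
    intro x'' _
    by_cases hxx : x'' = x
    · subst hxx; rw [hg0]; norm_num
    · have hsum : ∑ y ∈ S x'' (!η x''), gs x y
          = ((S x'' (!η x'') ∩ S x (η x)).card : ℝ) * (1 / ((S x (η x)).card : ℝ)) := by
        rw [Finset.sum_congr rfl (fun y _ => hgs x y), Finset.sum_ite_mem,
          Finset.sum_const, nsmul_eq_mul]
      rw [hsum]
      have hsub : S x'' (!η x'') ∩ S x (η x) ⊆
          (S x'' false ∪ S x'' true) ∩ (S x false ∪ S x true) :=
        Finset.inter_subset_inter (hsubU x'' _) (hsubU x _)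
      have hc : ((S x'' (!η x'') ∩ S x (η x)).card : ℝ)
          ≤ 2 * (1/16 : ℝ)^2 * (L:ℝ) := by
        refine le_trans ?_ (hint x'' x hxx)
        exact_mod_cast Finset.card_le_card hsub
      have hmx := hm x
      rw [mul_one_div, div_le_iff₀ (hm_pos x)]
      nlinarith [hm_pos x]
  -- sum over union splits into η part plus !η part
  have hUsplit : ∀ x, ∑ y ∈ S x false ∪ S x true, s x y
      = (∑ y ∈ S x (η x), s x y) + (∑ y ∈ S x (!η x), s x y) := by
    intro x
    rw [Finset.sum_union (hdisj x)]
    cases hη : η x <;> simp <;> ring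
  -- bound on the wrong-side mass of s
  have hB : (∑ x : X', ∑ y ∈ S x (!η x), s x y) ≤ 0.3 * N := by
    have h1 : (∑ x : X', ∑ y ∈ S x (!η x), s x y)
        ≤ ∑ x : X', Finset.univ.sup' Finset.univ_nonempty
          (fun x'' : X' => ∑ y ∈ S x'' (!η x''), s x y) := by
      apply Finset.sum_le_sum
      intro x _
      exact Finset.le_sup' (fun x'' : X' => ∑ y ∈ S x'' (!η x''), s x y)
        (Finset.mem_univ x)
    have h2 : (∑ x : X', Finset.univ.sup' Finset.univ_nonempty
          (fun x'' : X' => ∑ y ∈ S x'' (!η x''), gs x y)) ≤ (1/4 : ℝ) * N := by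
      calc _ ≤ ∑ _x : X', (1/4 : ℝ) := Finset.sum_le_sum (fun x _ => hsupg x)
        _ = (1/4 : ℝ) * N := by
          rw [Finset.sum_const, nsmul_eq_mul, Finset.card_univ]; ring
    rw [div_le_iff₀ hN0, add_mul, div_mul_cancel₀ _ (ne_of_gt hN0)] at hent
    linarith
  -- lower bound on the total union mass of s
  have hU : 0.95 * N ≤ ∑ x : X', ∑ y ∈ S x false ∪ S x true, s x y := by
    have hrw : (∑ x : X', ∑ y ∈ S x false ∪ S x true, (s x y - gs x y))
        = (∑ x : X', ∑ y ∈ S x false ∪ S x true, s x y) - N := by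
      rw [show N = ∑ _x : X', (1:ℝ) by
        rw [Finset.sum_const, nsmul_eq_mul, Finset.card_univ]; ring]
      rw [← Finset.sum_sub_distrib]
      apply Finset.sum_congr rfl
      intro x _
      rw [Finset.sum_sub_distrib, hgU x]
    rw [hrw] at hind
    have h := (abs_le.mp hind).1
    rw [le_div_iff₀ hN0] at h
    linarith
  rw [le_div_iff₀ hN0]
  have hsplit : (∑ x : X', ∑ y ∈ S x false ∪ S x true, s x y)
      = (∑ x : X', ∑ y ∈ S x (η x), s x y)
        + (∑ x : X', ∑ y ∈ S x (!η x), s x y) := by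
    rw [← Finset.sum_add_distrib]
    exact Finset.sum_congr rfl (fun x _ => hUsplit x)
  linarith
end
end
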